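/- Let n ≥ 1 and η ∈ (0,1). Define V: ℝⁿ → ℝ by V(λ) = ∏_{i=1}^n (1 + λ_i²)^{1/2}, and set e_i = λ_i/(1 + λ_i²). Then at every λ ∈ ℝⁿ: (i) ∂_i V = e_i V, ∂_{ii} V = V/(1+λ_i²)², and ∂_{ij} V = V e_i e_j for i ≠ j, so that the Hessian matrix of V satisfies (∂_{ij}V)/V = e_i e_j + δ_{ij}(1 − λ_i²)/(1+λ_i²)²; and (ii) if |λ_i| ≤ 1 − η for all i, then for every σ ∈ ℝⁿ, σᵀ (D²V(λ)) σ ≥ V(λ) · min_i [(1−λ_i²)/(1+λ_i²)²] · |σ|² ≥ (η(2−η)/4) |σ|². In particular V is uniformly convex on the cube {λ : max_i |λ_i| ≤ 1−η}. -/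

import Mathlib

open MeasureTheory Metric Set Filter

noncomputable section

abbrev Euc (n : ℕ) := EuclideanSpace ℝ (Fin n)
abbrev Mat (n : ℕ) := Fin n → Fin n → ℝ

def eb (n : ℕ) (i : Fin n) : Euc n := EuclideanSpace.single i 1

abbrev B1 (n : ℕ) : Set (Euc n) := Metric.ball 0 1

/-- Squared Frobenius (Hilbert–Schmidt) norm of a matrix. -/
def frob2 {n : ℕ} (σ : Mat n) : ℝ := ∑ i, ∑ j, (σ i j) ^ 2

/-- Frobenius (Hilbert–Schmidt) norm of a matrix. -/
def frob {n : ℕ} (σ : Mat n) : ℝ := Real.sqrt (frob2 σ)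

/-- The matrix with a single entry 1 in position `(i,j)`. -/
def Em {n : ℕ} (i j : Fin n) : Mat n := fun a b => if a = i ∧ b = j then 1 else 0

def symmMat {n : ℕ} (σ : Mat n) : Prop := ∀ i j, σ i j = σ j i

/-- Hessian matrix of a (smooth) function, via the iterated Fréchet derivative. -/
def hess {n : ℕ} (η : Euc n → ℝ) (x : Euc n) : Mat n :=
  fun i j => iteratedFDeriv ℝ 2 η x ![eb n i, eb n j]

/-- `η` is a `C_c^∞` test function with support inside `Ω`. -/
def TestFun {n : ℕ} (Ω : Set (Euc n)) (η : Euc n → ℝ) : Prop :=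
  ContDiff ℝ (⊤ : ℕ∞) η ∧ HasCompactSupport η ∧ tsupport η ⊆ Ω

/-- `u ∈ W^{2,∞}(Ω)`, with (symmetric) a.e. second derivative matrix `D2u`. -/
structure IsW2infOn {n : ℕ} (u : Euc n → ℝ) (Ω : Set (Euc n)) (D2u : Euc n → Mat n) : Prop where
  diffOn : DifferentiableOn ℝ u Ω
  meas : AEStronglyMeasurable D2u (volume.restrict Ω)
  hess_ae : ∀ᵐ x ∂(volume.restrict Ω), ∃ L : Euc n →L[ℝ] (Euc n →L[ℝ] ℝ),
      HasFDerivAt (fderiv ℝ u) L x ∧ ∀ i j, D2u x i j = (L (eb n i)) (eb n j)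
  symm_ae : ∀ᵐ x ∂(volume.restrict Ω), symmMat (D2u x)
  bdd : ∃ M : ℝ, ∀ᵐ x ∂(volume.restrict Ω), frob (D2u x) ≤ M

/-- `u ∈ W^{2,p}(Ω)`, with a.e. second derivative matrix `D2u` in `L^p`. -/
structure IsW2pOn {n : ℕ} (u : Euc n → ℝ) (Ω : Set (Euc n)) (D2u : Euc n → Mat n) (p : ℝ) :
    Prop where
  diffOn : DifferentiableOn ℝ u Ω
  meas : AEStronglyMeasurable D2u (volume.restrict Ω)
  hess_ae : ∀ᵐ x ∂(volume.restrict Ω), ∃ L : Euc n →L[ℝ] (Euc n →L[ℝ] ℝ),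
      HasFDerivAt (fderiv ℝ u) L x ∧ ∀ i j, D2u x i j = (L (eb n i)) (eb n j)
  lp : IntegrableOn (fun x => frob (D2u x) ^ p) Ω

/-- `‖D2u‖_{L^∞(Ω)} ≤ K`. -/
def BddBy {n : ℕ} (D2u : Euc n → Mat n) (Ω : Set (Euc n)) (K : ℝ) : Prop :=
  ∀ᵐ x ∂(volume.restrict Ω), frob (D2u x) ≤ K

/-- `f` has bounded mean oscillation with modulus `ω` on `Ω`. -/
def BMOModulus {n : ℕ} (f : Euc n → Mat n) (Ω : Set (Euc n)) (ω : ℝ) : Prop :=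
  ∀ (z : Euc n) (r : ℝ), 0 < r → Metric.ball z r ⊆ Ω →
    (⨍ x in Metric.ball z r, frob (f x - (⨍ y in Metric.ball z r, f y))) ≤ ω

/-- `F` is uniformly convex on `U` with ellipticity constant `Λ`. -/
def UnifConvexOn {n : ℕ} (F : Mat n → ℝ) (U : Set (Mat n)) (Λ : ℝ) : Prop :=
  ∀ ξ ∈ U, ∀ σ : Mat n, symmMat σ →
    Λ * frob2 σ ≤ iteratedFDerivWithin ℝ 2 F U ξ ![σ, σ]

/-- Weak Euler–Lagrange equation `∫ F^{ij}(D²u) η_{ij} = 0` for all test functions on `Ω`. -/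
def FEulerLagrange {n : ℕ} (F : Mat n → ℝ) (U : Set (Mat n)) (D2u : Euc n → Mat n)
    (Ω : Set (Euc n)) : Prop :=
  ∀ η, TestFun Ω η →
    ∫ x in Ω, (∑ i, ∑ j, fderivWithin ℝ F U (D2u x) (Em i j) * hess η x i j) = 0

abbrev Coeffs (n : ℕ) := Mat n → Fin n → Fin n → Fin n → Fin n → ℝ

/-- Weak double-divergence equation `∫ a^{ij,kl}(D²u) u_{ij} η_{kl} = 0` on `Ω`. -/
def RegularEq {n : ℕ} (a : Coeffs n) (D2u : Euc n → Mat n) (Ω : Set (Euc n)) : Prop :=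
  ∀ η, TestFun Ω η →
    ∫ x in Ω, (∑ i, ∑ j, ∑ k, ∑ l, a (D2u x) i j k l * D2u x i j * hess η x k l) = 0

/-- Constant-coefficient double-divergence equation `∫ c^{ij,kl} w_{ij} η_{kl} = 0` on `Ω`. -/
def ConstCoeffEq {n : ℕ} (c : Fin n → Fin n → Fin n → Fin n → ℝ) (D2w : Euc n → Mat n)
    (Ω : Set (Euc n)) : Prop :=
  ∀ η, TestFun Ω η →
    ∫ x in Ω, (∑ i, ∑ j, ∑ k, ∑ l, c i j k l * D2w x i j * hess η x k l) = 0

/-- Legendre ellipticity for a constant coefficient tensor. -/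
def LegendreConst {n : ℕ} (c : Fin n → Fin n → Fin n → Fin n → ℝ) (lam : ℝ) : Prop :=
  ∀ σ : Mat n, symmMat σ → lam * frob2 σ ≤ ∑ i, ∑ j, ∑ k, ∑ l, c i j k l * σ i j * σ k l

/-- The linearized coefficients `b^{ij,kl}` attached to `a`, `D²u`, step `h` and direction `m`. -/
def bcoef {n : ℕ} (a : Coeffs n) (U : Set (Mat n)) (D2u : Euc n → Mat n)
    (h : ℝ) (m : Fin n) (x : Euc n) (i j k l : Fin n) : ℝ :=
  a (D2u (x + h • eb n m)) i j k l +
    ∑ p, ∑ q, (∫ t in (0:ℝ)..(1:ℝ),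
      fderivWithin ℝ (fun M => a M p q k l) U
        (t • D2u (x + h • eb n m) + (1 - t) • D2u x) (Em i j)) * D2u x p q

/-- Difference quotient of `u` in direction `e_m` with step `h`. -/
def dq {n : ℕ} (u : Euc n → ℝ) (h : ℝ) (m : Fin n) (x : Euc n) : ℝ :=
  (u (x + h • eb n m) - u x) / h

/-- Difference quotient of a matrix-valued function (e.g. of the Hessian of `u`). -/
def dqM {n : ℕ} (D2u : Euc n → Mat n) (h : ℝ) (m : Fin n) (x : Euc n) : Mat n :=
  fun i j => (D2u (x + h • eb n m) i j - D2u x i j) / h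

/-- `D3u` is a weak (third-order) derivative of `D2u` on `Ω`. -/
def IsWeakThird {n : ℕ} (Ω : Set (Euc n)) (D2u : Euc n → Mat n)
    (D3u : Euc n → Fin n → Fin n → Fin n → ℝ) : Prop :=
  ∀ (m i j : Fin n) (η : Euc n → ℝ), TestFun Ω η →
    ∫ x in Ω, D2u x i j * fderiv ℝ η x (eb n m) = - ∫ x in Ω, D3u x m i j * η x

/-- Integrand of the `W^{3,p}`-norm (to the power `p`). -/
def w3pDen {n : ℕ} (u : Euc n → ℝ) (D2u : Euc n → Mat n)
    (D3u : Euc n → Fin n → Fin n → Fin n → ℝ) (p : ℝ) (x : Euc n) : ℝ :=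
  |u x| ^ p + (∑ i, (fderiv ℝ u x (eb n i)) ^ 2) ^ (p / 2) + (frob2 (D2u x)) ^ (p / 2)
    + (∑ m, ∑ i, ∑ j, (D3u x m i j) ^ 2) ^ (p / 2)

/-- Integrand of the squared `W^{2,2}`-norm. -/
def w22Den {n : ℕ} (u : Euc n → ℝ) (D2u : Euc n → Mat n) (x : Euc n) : ℝ :=
  (u x) ^ 2 + (∑ i, (fderiv ℝ u x (eb n i)) ^ 2) + frob2 (D2u x)

/-- `u ∈ W^{2,2}(Ω)` with weak gradient `Du` and weak Hessian `D2u`. -/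
structure IsW22On {n : ℕ} (u : Euc n → ℝ) (Ω : Set (Euc n))
    (Du : Euc n → Fin n → ℝ) (D2u : Euc n → Mat n) : Prop where
  weak1 : ∀ (m : Fin n) (η : Euc n → ℝ), TestFun Ω η →
    ∫ x in Ω, u x * fderiv ℝ η x (eb n m) = - ∫ x in Ω, Du x m * η x
  weak2 : ∀ (i m : Fin n) (η : Euc n → ℝ), TestFun Ω η →
    ∫ x in Ω, Du x i * fderiv ℝ η x (eb n m) = - ∫ x in Ω, D2u x i m * η x
  l2 : IntegrableOn (fun x => (u x) ^ 2 + (∑ i, (Du x i) ^ 2) + frob2 (D2u x)) Ω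

/-- `(f, Df, D2f)` lies in the `W^{2,2}(Ω)`-closure of `C_c^∞(Ω)`. -/
def InW22Closure {n : ℕ} (Ω : Set (Euc n)) (f : Euc n → ℝ) (Df : Euc n → Fin n → ℝ)
    (D2f : Euc n → Mat n) : Prop :=
  ∃ ηs : ℕ → Euc n → ℝ, (∀ k, TestFun Ω (ηs k)) ∧
    Filter.Tendsto (fun k => ∫ x in Ω,
      ((ηs k x - f x) ^ 2 + (∑ i, (fderiv ℝ (ηs k) x (eb n i) - Df x i) ^ 2) +
        frob2 (fun i j => hess (ηs k) x i j - D2f x i j))) Filter.atTop (nhds 0)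
/-!
Writing `√(1 + t²) = exp (½ log (1 + t²))` turns `V` into `exp ∘ S` for the separable function
`S λ = ∑ᵢ g (λᵢ)`, `g t = ½ log (1 + t²)`, with `g' t = t / (1 + t²)` and
`g'' t = (1 - t²) / (1 + t²)²`. The Hessian of `exp ∘ S` is `e^S (DS ⊗ DS + D²S)`: the first
term is positive semidefinite and the second is diagonal with entries `g'' (λᵢ)`. On the cube
`|λᵢ| ≤ 1 - η` one has `1 - λᵢ² ≥ η (2 - η)` and `(1 + λᵢ²)² ≤ 4`, and `V ≥ 1` everywhere.
-/

section ExpSum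

variable {ι : Type*} [Fintype ι] {g g' g'' : ℝ → ℝ}

def expSum (g : ℝ → ℝ) (x : ι → ℝ) : ℝ := Real.exp (∑ i, g (x i))

theorem expSum_pos (g : ℝ → ℝ) (x : ι → ℝ) : 0 < expSum g x := Real.exp_pos _

theorem one_le_expSum (hg : ∀ t, 0 ≤ g t) (x : ι → ℝ) : 1 ≤ expSum g x :=
  Real.one_le_exp <| Finset.sum_nonneg fun i _ => hg (x i)

theorem hasFDerivAt_expSum (hg : ∀ t, HasDerivAt g (g' t) t) (x : ι → ℝ) :
    HasFDerivAt (expSum g)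
      (expSum g x • ∑ i, g' (x i) • (ContinuousLinearMap.proj i : (ι → ℝ) →L[ℝ] ℝ)) x :=
  (Real.hasDerivAt_exp _).comp_hasFDerivAt x <| HasFDerivAt.fun_sum fun i _ =>
    (hg (x i)).comp_hasFDerivAt x (hasFDerivAt_apply i x)

theorem fderiv_expSum_apply (hg : ∀ t, HasDerivAt g (g' t) t) (x v : ι → ℝ) :
    fderiv ℝ (expSum g) x v = expSum g x * ∑ i, g' (x i) * v i := by
  simp [(hasFDerivAt_expSum hg x).fderiv]

theorem iteratedFDeriv_two_expSum_apply (hg : ∀ t, HasDerivAt g (g' t) t)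
    (hg' : ∀ t, HasDerivAt g' (g'' t) t) (x v w : ι → ℝ) :
    iteratedFDeriv ℝ 2 (expSum g) x ![v, w] = expSum g x *
      ((∑ i, g' (x i) * v i) * (∑ i, g' (x i) * w i) + ∑ i, g'' (x i) * v i * w i) := by
  have hD : fderiv ℝ (expSum g) = fun y : ι → ℝ => ∑ i,
      (expSum g y * g' (y i)) • (ContinuousLinearMap.proj i : (ι → ℝ) →L[ℝ] ℝ) := by
    funext y
    simp only [(hasFDerivAt_expSum hg y).fderiv, Finset.smul_sum, smul_smul]
  have hD2 : HasFDerivAt (fun y : ι → ℝ => ∑ i,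
      (expSum g y * g' (y i)) • (ContinuousLinearMap.proj i : (ι → ℝ) →L[ℝ] ℝ)) _ x :=
    HasFDerivAt.fun_sum fun i _ =>
      ((hasFDerivAt_expSum hg x).fun_mul
        ((hg' (x i)).comp_hasFDerivAt x (hasFDerivAt_apply i x))).smul_const
        (ContinuousLinearMap.proj i : (ι → ℝ) →L[ℝ] ℝ)
  rw [iteratedFDeriv_two_apply, hD, hD2.fderiv]
  simp only [sum_apply, ContinuousLinearMap.smulRight_apply, add_apply, smul_apply,
    ContinuousLinearMap.proj_apply, Function.comp_apply, smul_eq_mul, Matrix.cons_val_zero,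
    Matrix.cons_val_one]
  rw [mul_add, add_comm]
  simp only [add_mul, Finset.sum_add_distrib, Finset.mul_sum, Finset.sum_mul]
  congr 1 <;> refine Finset.sum_congr rfl fun i _ => ?_
  · ring
  · exact Finset.sum_congr rfl fun k _ => by ring

theorem fderiv_expSum_single [DecidableEq ι] (hg : ∀ t, HasDerivAt g (g' t) t)
    (x : ι → ℝ) (i : ι) :
    fderiv ℝ (expSum g) x (Pi.single i 1) = g' (x i) * expSum g x := by
  simp [fderiv_expSum_apply hg, Pi.single_apply, mul_comm]

theorem iteratedFDeriv_two_expSum_single [DecidableEq ι] (hg : ∀ t, HasDerivAt g (g' t) t)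
    (hg' : ∀ t, HasDerivAt g' (g'' t) t) (x : ι → ℝ) (i j : ι) :
    iteratedFDeriv ℝ 2 (expSum g) x ![Pi.single i 1, Pi.single j 1] =
      expSum g x * (g' (x i) * g' (x j) + if i = j then g'' (x i) else 0) := by
  rcases eq_or_ne i j with rfl | hij
  · simp [iteratedFDeriv_two_expSum_apply hg hg', Pi.single_apply]
  · simp [iteratedFDeriv_two_expSum_apply hg hg', Pi.single_apply, hij, hij.symm]

theorem iInf_mul_le_iteratedFDeriv_two_expSum (hg : ∀ t, HasDerivAt g (g' t) t)
    (hg' : ∀ t, HasDerivAt g' (g'' t) t) (x σ : ι → ℝ) :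
    expSum g x * (⨅ i, g'' (x i)) * ∑ i, σ i ^ 2 ≤ iteratedFDeriv ℝ 2 (expSum g) x ![σ, σ] := by
  have hmin : (⨅ i, g'' (x i)) * ∑ i, σ i ^ 2 ≤ ∑ i, g'' (x i) * σ i * σ i := by
    rw [Finset.mul_sum]
    refine Finset.sum_le_sum fun i _ => ?_
    rw [mul_assoc, ← sq]
    exact mul_le_mul_of_nonneg_right (ciInf_le (Set.finite_range _).bddBelow i) (sq_nonneg _)
  rw [iteratedFDeriv_two_expSum_apply hg hg', mul_assoc]
  exact mul_le_mul_of_nonneg_left (le_add_of_nonneg_of_le (mul_self_nonneg _) hmin)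
    (expSum_pos g x).le

end ExpSum

theorem hasDerivAt_half_log_one_add_sq (t : ℝ) :
    HasDerivAt (fun s => Real.log (1 + s ^ 2) / 2) (t / (1 + t ^ 2)) t := by
  refine (((hasDerivAt_pow 2 t).const_add 1).log (by positivity) |>.div_const 2).congr_deriv ?_
  field_simp
  ring

theorem hasDerivAt_div_one_add_sq (t : ℝ) :
    HasDerivAt (fun s => s / (1 + s ^ 2)) ((1 - t ^ 2) / (1 + t ^ 2) ^ 2) t := by
  refine ((hasDerivAt_id' t).fun_div ((hasDerivAt_pow 2 t).const_add 1)
    (by positivity)).congr_deriv ?_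
  ring

theorem sqrt_one_add_sq_eq_exp (t : ℝ) :
    Real.sqrt (1 + t ^ 2) = Real.exp (Real.log (1 + t ^ 2) / 2) := by
  rw [Real.sqrt_eq_rpow, Real.rpow_def_of_pos (by positivity), one_div, div_eq_mul_inv]

theorem mul_two_sub_div_four_le {η t : ℝ} (hη : 0 ≤ η) (ht : |t| ≤ 1 - η) :
    η * (2 - η) / 4 ≤ (1 - t ^ 2) / (1 + t ^ 2) ^ 2 := by
  have ht2 : t ^ 2 ≤ (1 - η) ^ 2 := sq_le_sq' (abs_le.1 ht).1 (abs_le.1 ht).2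
  have h1 : t ^ 2 ≤ 1 := ht2.trans (by nlinarith [abs_nonneg t])
  exact div_le_div₀ (sub_nonneg.2 h1) (by nlinarith) (by positivity) (by nlinarith)

/-- proof of Corollary 1.6, Section 5.1. Uniform convexity of the area
integrand `V(λ) = ∏ᵢ(1+λᵢ²)^{1/2}`: formulas for its first and second partial derivatives,
and, when `|λᵢ| ≤ 1-η` for all `i`, the two-sided lower bound
`σᵀ D²V σ ≥ V(λ)·minᵢ[(1-λᵢ²)/(1+λᵢ²)²]·|σ|² ≥ (η(2-η)/4)|σ|²`. -/
theorem area_integrand_uniformly_convex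
    (n : ℕ) (hn : 1 ≤ n) (η : ℝ) (hη : η ∈ Set.Ioo (0 : ℝ) 1)
    (V : (Fin n → ℝ) → ℝ)
    (hV : ∀ lam : Fin n → ℝ, V lam = ∏ i, Real.sqrt (1 + lam i ^ 2)) :
    ∀ lam : Fin n → ℝ,
      (∀ i, fderiv ℝ V lam (Pi.single i 1) = (lam i / (1 + lam i ^ 2)) * V lam) ∧
      (∀ i j, iteratedFDeriv ℝ 2 V lam ![Pi.single i 1, Pi.single j 1] =
        V lam * ((lam i / (1 + lam i ^ 2)) * (lam j / (1 + lam j ^ 2)) +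
          (if i = j then (1 - lam i ^ 2) / (1 + lam i ^ 2) ^ 2 else 0))) ∧
      ((∀ i, |lam i| ≤ 1 - η) →
        ∀ σ : Fin n → ℝ,
          (V lam * (⨅ i, (1 - lam i ^ 2) / (1 + lam i ^ 2) ^ 2) * (∑ i, σ i ^ 2) ≤
            iteratedFDeriv ℝ 2 V lam ![σ, σ]) ∧
          ((η * (2 - η) / 4) * (∑ i, σ i ^ 2) ≤
            V lam * (⨅ i, (1 - lam i ^ 2) / (1 + lam i ^ 2) ^ 2) * (∑ i, σ i ^ 2))) := by
  obtain rfl : V = expSum fun s => Real.log (1 + s ^ 2) / 2 := funext fun lam => by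
    rw [hV, expSum, Real.exp_sum]
    exact Finset.prod_congr rfl fun i _ => sqrt_one_add_sq_eq_exp (lam i)
  have hg := hasDerivAt_half_log_one_add_sq
  have hg' := hasDerivAt_div_one_add_sq
  have hg0 (t : ℝ) : 0 ≤ Real.log (1 + t ^ 2) / 2 :=
    div_nonneg (Real.log_nonneg (le_add_of_nonneg_right (sq_nonneg t))) zero_le_two
  have : Nonempty (Fin n) := ⟨⟨0, hn⟩⟩
  intro lam
  refine ⟨fderiv_expSum_single hg lam, iteratedFDeriv_two_expSum_single hg hg' lam,
    fun hle σ => ⟨iInf_mul_le_iteratedFDeriv_two_expSum hg hg' lam σ, ?_⟩⟩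
  have hm : η * (2 - η) / 4 ≤ ⨅ i, (1 - lam i ^ 2) / (1 + lam i ^ 2) ^ 2 :=
    le_ciInf fun i => mul_two_sub_div_four_le hη.1.le (hle i)
  have hm0 : 0 ≤ ⨅ i, (1 - lam i ^ 2) / (1 + lam i ^ 2) ^ 2 :=
    le_trans (div_nonneg (mul_nonneg hη.1.le (by linarith [hη.2])) zero_le_four) hm
  exact mul_le_mul_of_nonneg_right
    (hm.trans (le_mul_of_one_le_left hm0 (one_le_expSum hg0 lam)))
    (Finset.sum_nonneg fun i _ => sq_nonneg (σ i))
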